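/- Let M be Borchardt's map M(u) = ((u₁+u₂+u₃+u₄)/4, (√(u₁u₂)+√(u₃u₄))/2, (√(u₁u₃)+√(u₂u₄))/2, (√(u₁u₄)+√(u₂u₃))/2) on positive real 4-tuples. If c₁ > c₂ > c₃ > c₄ > 0 then M₁(c) > M₂(c) > M₃(c) > M₄(c). -/
import Mathlib

noncomputable def M (u : ℝ × ℝ × ℝ × ℝ) : ℝ × ℝ × ℝ × ℝ :=
  ((u.1 + u.2.1 + u.2.2.1 + u.2.2.2) / 4,
   (Real.sqrt (u.1 * u.2.1) + Real.sqrt (u.2.2.1 * u.2.2.2)) / 2,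
   (Real.sqrt (u.1 * u.2.2.1) + Real.sqrt (u.2.1 * u.2.2.2)) / 2,
   (Real.sqrt (u.1 * u.2.2.2) + Real.sqrt (u.2.1 * u.2.2.1)) / 2)

theorem stmt9 (c₁ c₂ c₃ c₄ : ℝ) (h4 : 0 < c₄) (h34 : c₄ < c₃) (h23 : c₃ < c₂)
    (h12 : c₂ < c₁) :
    (M (c₁, c₂, c₃, c₄)).2.1 < (M (c₁, c₂, c₃, c₄)).1 ∧
    (M (c₁, c₂, c₃, c₄)).2.2.1 < (M (c₁, c₂, c₃, c₄)).2.1 ∧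
    (M (c₁, c₂, c₃, c₄)).2.2.2 < (M (c₁, c₂, c₃, c₄)).2.2.1 := by
  have h3 : 0 < c₃ := h4.trans h34
  have h2 : 0 < c₂ := h3.trans h23
  have h1 : 0 < c₁ := h2.trans h12
  set a := Real.sqrt c₁
  set b := Real.sqrt c₂
  set c := Real.sqrt c₃
  set d := Real.sqrt c₄
  have hd : 0 < d := Real.sqrt_pos.mpr h4
  have hdc : d < c := Real.sqrt_lt_sqrt h4.le h34
  have hcb : c < b := Real.sqrt_lt_sqrt h3.le h23
  have hba : b < a := Real.sqrt_lt_sqrt h2.le h12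
  have e1 : c₁ = a ^ 2 := (Real.sq_sqrt h1.le).symm
  have e2 : c₂ = b ^ 2 := (Real.sq_sqrt h2.le).symm
  have e3 : c₃ = c ^ 2 := (Real.sq_sqrt h3.le).symm
  have e4 : c₄ = d ^ 2 := (Real.sq_sqrt h4.le).symm
  have s12 : Real.sqrt (c₁ * c₂) = a * b := Real.sqrt_mul h1.le c₂
  have s13 : Real.sqrt (c₁ * c₃) = a * c := Real.sqrt_mul h1.le c₃
  have s14 : Real.sqrt (c₁ * c₄) = a * d := Real.sqrt_mul h1.le c₄
  have s23 : Real.sqrt (c₂ * c₃) = b * c := Real.sqrt_mul h2.le c₃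
  have s24 : Real.sqrt (c₂ * c₄) = b * d := Real.sqrt_mul h2.le c₄
  have s34 : Real.sqrt (c₃ * c₄) = c * d := Real.sqrt_mul h3.le c₄
  simp only [M, s12, s13, s14, s23, s24, s34]
  refine ⟨?_, ?_, ?_⟩
  · rw [e1, e2, e3, e4]; nlinarith [sq_nonneg (a - b), sq_nonneg (c - d)]
  · nlinarith [mul_pos (sub_pos.mpr hcb) (sub_pos.mpr hba)]
  · nlinarith [mul_pos (sub_pos.mpr hdc) (sub_pos.mpr hba)]
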